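/- Let R be a commutative Noetherian ring, a an ideal of R, and M an R-module with Supp_R(M) ⊆ V(a). If M is weakly Laskerian, then M is a-weakly cofinite. -/

import Mathlib

open CategoryTheory Opposite

universe u

/-- A module is weakly Laskerian if every quotient has finitely many associated primes. -/
def IsWeaklyLaskerian (R : Type u) [CommRing R] (M : Type u) [AddCommGroup M]
    [Module R M] : Prop :=
  ∀ N : Submodule R M, (associatedPrimes R (M ⧸ N)).Finite

/-- `a`-weakly cofinite: support in `V(a)` and all `Ext^i(R/a, M)` weakly Laskerian. -/
def IsWeaklyCofinite (R : Type u) [CommRing R] (a : Ideal R) (M : ModuleCat.{u} R) : Prop :=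
  Module.support R M ⊆ PrimeSpectrum.zeroLocus (a : Set R) ∧
  ∀ i : ℕ, IsWeaklyLaskerian R
    (((Ext R (ModuleCat.{u} R) i).obj (op (ModuleCat.of R (R ⧸ a)))).obj M)

/-!
A finitely generated module `X` over a Noetherian ring has a projective resolution `P` by finite
free modules, so `Ext^i(X, M)` is a subquotient of `Hom(P_i, M)`, which embeds into a finite
direct sum `M^k`. Weakly Laskerian modules are closed under submodules, quotients and extensions,
hence under all of these operations.
-/

namespace IsWeaklyLaskerian

variable {R : Type u} [CommRing R] {M M₁ M₂ N : Type u} [AddCommGroup M] [Module R M]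
  [AddCommGroup M₁] [Module R M₁] [AddCommGroup M₂] [Module R M₂]
  [AddCommGroup N] [Module R N]

lemma of_subsingleton [Subsingleton M] : IsWeaklyLaskerian R M := fun K => by
  have : Subsingleton (M ⧸ K) := K.mkQ_surjective.subsingleton
  simp [associatedPrimes.eq_empty_of_subsingleton]

lemma of_surjective (f : M →ₗ[R] M₂) (hf : Function.Surjective f) (hM : IsWeaklyLaskerian R M) :
    IsWeaklyLaskerian R M₂ := fun K => by
  rw [← LinearEquiv.AssociatedPrimes.eq
    ((K.mkQ ∘ₗ f).quotKerEquivOfSurjective (K.mkQ_surjective.comp hf))]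
  exact hM _

lemma of_injective (f : M₁ →ₗ[R] M) (hf : Function.Injective f) (hM : IsWeaklyLaskerian R M) :
    IsWeaklyLaskerian R M₁ := fun K => by
  have hinj : Function.Injective (K.mapQ (K.map f) f (K.le_comap_map f)) := by
    rw [← LinearMap.ker_eq_bot, Submodule.ker_mapQ, Submodule.comap_map_eq_of_injective hf,
      Submodule.mkQ_map_self]
  exact (hM _).subset (associatedPrimes.subset_of_injective hinj)

lemma of_exact {f : M₁ →ₗ[R] M} {g : M →ₗ[R] M₂} (hfg : Function.Exact f g)
    (h₁ : IsWeaklyLaskerian R M₁) (h₂ : IsWeaklyLaskerian R M₂) : IsWeaklyLaskerian R M := by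
  intro K
  -- `M₁ ⧸ f⁻¹ K → M ⧸ K → M₂ ⧸ g K` is exact with injective first map
  have hinj : Function.Injective (Submodule.mapQ (K.comap f) K f le_rfl) := by
    rw [← LinearMap.ker_eq_bot, Submodule.ker_mapQ, Submodule.mkQ_map_self]
  have hexact := (hfg.exact_mapQ_iff le_rfl (K.le_comap_map g)).mpr inf_le_right
  exact ((h₁ _).union (h₂ _)).subset (associatedPrimes.subset_union_of_exact hinj hexact)

lemma prod (h₁ : IsWeaklyLaskerian R M₁) (h₂ : IsWeaklyLaskerian R M₂) :
    IsWeaklyLaskerian R (M₁ × M₂) :=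
  of_exact Function.Exact.inl_snd h₁ h₂

lemma pi (hM : IsWeaklyLaskerian R M) : ∀ n : ℕ, IsWeaklyLaskerian R (Fin n → M)
  | 0 => of_subsingleton
  | n + 1 => (hM.prod (pi hM n)).of_surjective _ (Fin.consLinearEquiv R fun _ => M).surjective

lemma linearMap [Module.Finite R N] (hM : IsWeaklyLaskerian R M) :
    IsWeaklyLaskerian R (N →ₗ[R] M) := by
  obtain ⟨n, π, hπ⟩ := Module.Finite.exists_fin' R N
  have hinj : Function.Injective (LinearMap.lcomp R M π) := fun φ ψ h =>
    LinearMap.ext fun x => by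
      obtain ⟨y, rfl⟩ := hπ x
      exact LinearMap.congr_fun h y
  exact ((hM.pi n).of_surjective _ (LinearEquiv.piRing R M (Fin n) R).symm.surjective).of_injective
    _ hinj

lemma homology (S : ShortComplex (ModuleCat.{u} R)) (h : IsWeaklyLaskerian R S.X₂) :
    IsWeaklyLaskerian R S.homology :=
  ((h.of_injective _ (LinearMap.ker S.g.hom).injective_subtype).of_surjective _
    (Submodule.mkQ_surjective _)).of_surjective _
    S.moduleCatHomologyIso.toLinearEquiv.symm.surjective

end IsWeaklyLaskerian

section Cover

variable (R : Type*) [Semiring R] (N : Type*) [AddCommMonoid N] [Module R N] [Module.Finite R N]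

noncomputable def finCoverRank : ℕ :=
  (Module.Finite.exists_fin' R N).choose

noncomputable def finCover : (Fin (finCoverRank R N) → R) →ₗ[R] N :=
  (Module.Finite.exists_fin' R N).choose_spec.choose

lemma finCover_surjective : Function.Surjective (finCover R N) :=
  (Module.Finite.exists_fin' R N).choose_spec.choose_spec

end Cover

section Syzygy

variable (R : Type*) [Ring R] [IsNoetherianRing R] (N : Type*) [AddCommGroup N] [Module R N]
  [Module.Finite R N]

/-- The `n`-th syzygy of `N`, as a submodule of the `n`-th free module `R^k` of the resolution,
paired with `k`. -/
noncomputable def syzygy : ℕ → Σ k : ℕ, Submodule R (Fin k → R)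
  | 0 => ⟨finCoverRank R N, LinearMap.ker (finCover R N)⟩
  | n + 1 => ⟨finCoverRank R (syzygy n).2, LinearMap.ker (finCover R (syzygy n).2)⟩

noncomputable def syzygyDiff (n : ℕ) :
    (Fin (syzygy R N (n + 1)).1 → R) →ₗ[R] (Fin (syzygy R N n).1 → R) :=
  (syzygy R N n).2.subtype ∘ₗ finCover R (syzygy R N n).2

variable {R N}

lemma range_syzygyDiff (n : ℕ) : LinearMap.range (syzygyDiff R N n) = (syzygy R N n).2 := by
  ext x
  refine ⟨?_, fun hx => ?_⟩
  · rintro ⟨y, rfl⟩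
    exact (finCover R _ y).2
  · obtain ⟨y, hy⟩ := finCover_surjective R (syzygy R N n).2 ⟨x, hx⟩
    exact ⟨y, congrArg Subtype.val hy⟩

lemma ker_syzygyDiff (n : ℕ) : LinearMap.ker (syzygyDiff R N n) = (syzygy R N (n + 1)).2 := by
  ext x
  exact Submodule.coe_eq_zero

end Syzygy

section FiniteFreeResolution

variable {R : Type u} [CommRing R] [IsNoetherianRing R] {N : Type u} [AddCommGroup N]
  [Module R N] [Module.Finite R N]

variable (R N) in
noncomputable def syzygyComplex : ChainComplex (ModuleCat.{u} R) ℕ :=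
  ChainComplex.of (fun n => ModuleCat.of R (Fin (syzygy R N n).1 → R))
    (fun n => ModuleCat.ofHom (syzygyDiff R N n))
    (fun n => ModuleCat.hom_ext <| LinearMap.range_le_ker_iff.mp
      ((range_syzygyDiff (n + 1)).trans (ker_syzygyDiff n).symm).le)

instance (n : ℕ) : Projective ((syzygyComplex R N).X n) :=
  ModuleCat.projective_of_free (Pi.basisFun R (Fin (syzygy R N n).1))

lemma syzygyComplex_d (n : ℕ) :
    (syzygyComplex R N).d (n + 1) n = ModuleCat.ofHom (syzygyDiff R N n) := by
  simp [syzygyComplex]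

lemma syzygyComplex_exactAt_succ (n : ℕ) : (syzygyComplex R N).ExactAt (n + 1) := by
  rw [HomologicalComplex.exactAt_iff' _ (n + 2) (n + 1) n (by simp) (by simp),
    ShortComplex.moduleCat_exact_iff]
  intro x hx
  dsimp only [HomologicalComplex.sc', HomologicalComplex.shortComplexFunctor'] at hx ⊢
  rw [syzygyComplex_d] at hx ⊢
  have hx' : x ∈ LinearMap.range (syzygyDiff R N (n + 1)) := by
    rwa [range_syzygyDiff, ← ker_syzygyDiff]
  exact hx'

lemma syzygyComplex_d_comp_finCover :
    (syzygyComplex R N).d 1 0 ≫ ModuleCat.ofHom (finCover R N) = 0 := by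
  rw [syzygyComplex_d]
  exact ModuleCat.hom_ext (LinearMap.range_le_ker_iff.mp (range_syzygyDiff 0).le)

variable (R N) in
noncomputable def finiteFreeResolution : ProjectiveResolution (ModuleCat.of R N) where
  complex := syzygyComplex R N
  π := (ChainComplex.toSingle₀Equiv _ _).symm ⟨_, syzygyComplex_d_comp_finCover⟩
  quasiIso := ⟨fun n => by
    cases n with
    | zero =>
      rw [ChainComplex.quasiIsoAt₀_iff, ShortComplex.quasiIso_iff_of_zeros' _ rfl rfl rfl]
      refine ⟨?_, (ModuleCat.epi_iff_surjective _).mpr (finCover_surjective R N)⟩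
      rw [ShortComplex.moduleCat_exact_iff_range_eq_ker]
      dsimp only [HomologicalComplex.shortComplexFunctor']
      simp only [syzygyComplex_d]
      exact range_syzygyDiff 0
    | succ n =>
      rw [quasiIsoAt_iff_exactAt' (hL := ChainComplex.exactAt_succ_single_obj ..)]
      exact syzygyComplex_exactAt_succ n⟩

instance (n : ℕ) : Module.Finite R ((finiteFreeResolution R N).complex.X n) :=
  inferInstanceAs (Module.Finite R (Fin (syzygy R N n).1 → R))

end FiniteFreeResolution

lemma isWeaklyLaskerian_Ext_of_projectiveResolution {R : Type u} [CommRing R]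
    {X : ModuleCat.{u} R} (P : ProjectiveResolution X) [∀ n, Module.Finite R (P.complex.X n)]
    {M : Type u} [AddCommGroup M] [Module R M] (hM : IsWeaklyLaskerian R M) (i : ℕ) :
    IsWeaklyLaskerian R (((Ext R (ModuleCat.{u} R) i).obj (op X)).obj (ModuleCat.of R M)) := by
  have hHom : IsWeaklyLaskerian R (P.complex.X i ⟶ ModuleCat.of R M) :=
    hM.linearMap.of_surjective _ ModuleCat.homLinearEquiv.symm.surjective
  exact (IsWeaklyLaskerian.homology _ hHom).of_surjective _
    (P.isoExt i (ModuleCat.of R M)).toLinearEquiv.symm.surjective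

theorem isWeaklyCofinite_of_isWeaklyLaskerian (R : Type u) [CommRing R] [IsNoetherianRing R]
    (a : Ideal R) (M : Type u) [AddCommGroup M] [Module R M]
    (hsupp : Module.support R M ⊆ PrimeSpectrum.zeroLocus (a : Set R))
    (hM : IsWeaklyLaskerian R M) :
    IsWeaklyCofinite R a (ModuleCat.of R M) :=
  ⟨hsupp, isWeaklyLaskerian_Ext_of_projectiveResolution (finiteFreeResolution R (R ⧸ a)) hM⟩
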